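/- Let m and d be positive integers with 1 ≤ d ≤ ⌊m/4⌋, let S be a string of length m + d, and set U = S[1 .. m] and V = S[d+1 .. d+m]. Suppose (δ; i_1, …, i_w) with δ ∈ [0 .. ⌊m/2⌋] and i_j − δ ∈ [1 .. m] for all j ∈ [1 .. w] is a successful deterministic sample for both U and V. If per(U) = per(V) and U[i_j − δ] = V[i_j − δ] for all j ∈ [1 .. w], then U = V and d is a period of S. -/

import Mathlib

/-- A string of length `n` is modeled as a function `S : ℕ → α`, read at the
1-indexed positions `1, …, n`.  A positive integer `p ≤ n` is a *period* of `S`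
if `S[i] = S[i+p]` holds for all `1 ≤ i ≤ n - p`. -/
def IsPeriod {α : Type*} (S : ℕ → α) (n p : ℕ) : Prop :=
  1 ≤ p ∧ p ≤ n ∧ ∀ i, 1 ≤ i → i + p ≤ n → S i = S (i + p)

/-- `per(S)`: the minimal period of the length-`n` string `S`. -/
noncomputable def minPer {α : Type*} (S : ℕ → α) (n : ℕ) : ℕ :=
  sInf {p | IsPeriod S n p}

/-- `(δ; i 1, …, i w)` is a *successful deterministic sample* for the length-`m` string `W`:
`δ ∈ [0 .. ⌊m/2⌋]`, each checkpoint satisfies `i j - δ ∈ [1 .. m]`, and for every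
`δ' ∈ [0 .. ⌊m/2⌋]` with `δ' - δ` not an integer multiple of `per(W)` there is a
checkpoint `i j` with `i j - δ' ∈ [1 .. m]` and `W[i j - δ'] ≠ W[i j - δ]`. -/
def SuccessfulDS {α : Type*} (W : ℕ → α) (m w : ℕ) (δ : ℕ) (i : ℕ → ℕ) : Prop :=
  δ ≤ m / 2 ∧ (∀ j, 1 ≤ j → j ≤ w → δ + 1 ≤ i j ∧ i j ≤ δ + m) ∧
    ∀ δ', δ' ≤ m / 2 → ¬ ((minPer W m : ℤ) ∣ ((δ' : ℤ) - (δ : ℤ))) →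
      ∃ j, 1 ≤ j ∧ j ≤ w ∧ δ' + 1 ≤ i j ∧ i j ≤ δ' + m ∧ W (i j - δ') ≠ W (i j - δ)

/-!
If the minimal period `p` of `U` did not divide `d`, the sample would have to separate the
shifts `δ` and `δ - d` in `U` (or `δ` and `δ + d` in `V`, when `δ < d`); but on the sampled
positions these shifts read `V[i_j - δ]` and `U[i_j - δ]`, which agree by assumption.
Hence `p ∣ d`, so `d` is a period of both `U` and `V`, and two overlapping windows with
common period `d ≤ m / 2` at offset `d` coincide.
-/

section Periods

variable {α : Type*} {S : ℕ → α} {n p : ℕ}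

theorem IsPeriod.apply_eq_apply_add_mul (h : IsPeriod S n p) :
    ∀ k i, 1 ≤ i → i + k * p ≤ n → S i = S (i + k * p)
  | 0, i, _, _ => by simp
  | k + 1, i, hi, hk => by
    rw [add_one_mul] at hk
    rw [h.2.2 i hi (by omega), h.apply_eq_apply_add_mul k (i + p) (by omega) (by omega),
      add_one_mul, add_assoc, add_comm p]

theorem IsPeriod.of_dvd (h : IsPeriod S n p) {q : ℕ} (hpq : p ∣ q) (hq : 1 ≤ q) (hqn : q ≤ n) :
    IsPeriod S n q := by
  obtain ⟨k, rfl⟩ := hpq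
  refine ⟨hq, hqn, fun i hi hin => ?_⟩
  rw [mul_comm] at hin ⊢
  exact h.apply_eq_apply_add_mul k i hi hin

theorem isPeriod_minPer (S : ℕ → α) (hn : 1 ≤ n) : IsPeriod S n (minPer S n) :=
  Nat.sInf_mem (s := {p | IsPeriod S n p}) ⟨n, hn, le_rfl, fun _ _ _ => by omega⟩

theorem isPeriod_of_forall_eq_shift {m d : ℕ} (hd : 1 ≤ d)
    (h : ∀ t, 1 ≤ t → t ≤ m → S t = S (d + t)) : IsPeriod S (m + d) d :=
  ⟨hd, by omega, fun t ht htm => by rw [h t ht (by omega), add_comm]⟩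

/-- Position `t` of `U` is compared with `t + d` inside `U` when `t + d ≤ m`, and otherwise
with `t` inside `V` as position `t - d`, which is positive because `2 * d ≤ m`. -/
theorem eq_shift_of_isPeriod {m d : ℕ} (h2d : 2 * d ≤ m)
    (hU : IsPeriod (fun t => S t) m d) (hV : IsPeriod (fun t => S (d + t)) m d) :
    ∀ t, 1 ≤ t → t ≤ m → S t = S (d + t) := by
  intro t ht htm
  by_cases htd : t + d ≤ m
  · exact (hU.2.2 t ht htd).trans (congrArg S (add_comm t d))
  · have : S (d + (t - d)) = S (d + (t - d + d)) := hV.2.2 (t - d) (by omega) (by omega)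
    rwa [show d + (t - d) = t by omega, show d + (t - d + d) = d + t by omega] at this

end Periods

theorem SuccessfulDS.minPer_dvd {α : Type*} {W : ℕ → α} {m w δ : ℕ} {i : ℕ → ℕ}
    (h : SuccessfulDS W m w δ i) {δ' : ℕ} (hδ' : δ' ≤ m / 2)
    (hagree : ∀ j, 1 ≤ j → j ≤ w → δ' + 1 ≤ i j → i j ≤ δ' + m → W (i j - δ') = W (i j - δ)) :
    (minPer W m : ℤ) ∣ (δ' : ℤ) - δ := by
  by_contra hndvd
  obtain ⟨j, hj1, hjw, hlo, hhi, hne⟩ := h.2.2 δ' hδ' hndvd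
  exact hne (hagree j hj1 hjw hlo hhi)

theorem minPer_dvd_of_successfulDS {α : Type*} {m d w δ : ℕ} {S : ℕ → α} {i : ℕ → ℕ}
    (hdm : d ≤ m / 4)
    (hU : SuccessfulDS (fun t => S t) m w δ i)
    (hV : SuccessfulDS (fun t => S (d + t)) m w δ i)
    (hper : minPer (fun t => S t) m = minPer (fun t => S (d + t)) m)
    (heq : ∀ j, 1 ≤ j → j ≤ w → S (i j - δ) = S (d + (i j - δ))) :
    minPer (fun t => S t) m ∣ d := by
  rw [← Int.natCast_dvd_natCast]
  by_cases hδ : d ≤ δ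
  · have hdvd := hU.minPer_dvd (δ' := δ - d) (by have := hU.1; omega) fun j hj1 hjw _ _ => by
      have := (hU.2.1 j hj1 hjw).1
      rw [heq j hj1 hjw, show i j - (δ - d) = d + (i j - δ) by omega]
    rwa [Nat.cast_sub hδ, sub_sub_cancel_left, Int.dvd_neg] at hdvd
  · have hdvd := hV.minPer_dvd (δ' := δ + d) (by omega) fun j hj1 hjw hlo _ => by
      rw [← heq j hj1 hjw, show d + (i j - (δ + d)) = i j - δ by omega]
    rwa [Nat.cast_add, add_sub_cancel_left, ← hper] at hdvd

/-- Deterministic samples distinguish two heavily-overlapping windows.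
Here `U = S[1 .. m]` is the map `t ↦ S t` and `V = S[d+1 .. d+m]` is the map `t ↦ S (d+t)`.
If a common tuple `(δ; i 1, …, i w)` is a successful deterministic sample for both `U` and
`V`, `per(U) = per(V)`, and `U[i j - δ] = V[i j - δ]` for all checkpoints, then `U = V`
and `d` is a period of `S` (of length `m + d`). -/
theorem deterministic_sample_distinguishes {α : Type*} (m d w : ℕ)
    (hd : 1 ≤ d) (hdm : d ≤ m / 4)
    (S : ℕ → α) (δ : ℕ) (i : ℕ → ℕ)
    (hU : SuccessfulDS (fun t => S t) m w δ i)
    (hV : SuccessfulDS (fun t => S (d + t)) m w δ i)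
    (hper : minPer (fun t => S t) m = minPer (fun t => S (d + t)) m)
    (heq : ∀ j, 1 ≤ j → j ≤ w → S (i j - δ) = S (d + (i j - δ))) :
    (∀ t, 1 ≤ t → t ≤ m → S t = S (d + t)) ∧ IsPeriod S (m + d) d := by
  have hm : 1 ≤ m := by omega
  have hpd := minPer_dvd_of_successfulDS hdm hU hV hper heq
  have hdU := (isPeriod_minPer (fun t => S t) hm).of_dvd hpd hd (by omega)
  have hdV := (isPeriod_minPer (fun t => S (d + t)) hm).of_dvd (hper ▸ hpd) hd (by omega)
  have hUV := eq_shift_of_isPeriod (by omega) hdU hdV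
  exact ⟨hUV, isPeriod_of_forall_eq_shift hd hUV⟩
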